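/- Let s ≥ 0, 𝒜 ∈ Sp(d,ℝ), g ∈ 𝒮(ℝ^d) nonzero, and let T be a bounded linear operator on L²(ℝ^d) such that |⟨Tπ(z)g, π(w)g⟩| ≤ H(w−𝒜z) for all w, z ∈ ℝ^{2d} and some H ∈ L¹_{v_s}(ℝ^{2d}). Then the adjoint T* satisfies |⟨T*π(z)g, π(w)g⟩| ≤ H(−𝒜(w − 𝒜^{-1}z)) for all w, z ∈ ℝ^{2d}; moreover the function z ↦ H(−𝒜z) belongs to L¹_{v_s}(ℝ^{2d}), so T* satisfies the kernel bound defining FIO(𝒜^{-1}, v_s). -/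

import Mathlib

open MeasureTheory Complex SchwartzMap
open scoped Real ContDiff ENNReal

/-- Configuration space `ℝ^d`. -/
abbrev ConfSpace (d : ℕ) := EuclideanSpace ℝ (Fin d)

/-- Phase space `ℝ^{2d}`, with coordinates split as `(x, η)`. -/
abbrev PhaseSpace (d : ℕ) := EuclideanSpace ℝ (Fin d ⊕ Fin d)

/-- First (position) component of a phase-space point. -/
noncomputable def posPart {d : ℕ} (z : PhaseSpace d) : ConfSpace d := WithLp.toLp 2 (fun i => z (Sum.inl i))

/-- Second (frequency) component of a phase-space point. -/
noncomputable def freqPart {d : ℕ} (z : PhaseSpace d) : ConfSpace d := WithLp.toLp 2 (fun i => z (Sum.inr i))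

/-- Assemble a phase-space point from its components. -/
noncomputable def phasePt {d : ℕ} (x η : ConfSpace d) : PhaseSpace d := WithLp.toLp 2 (Sum.elim x η)

/-- The polynomial weight `v_s(z) = (1 + |z|^2)^(s/2)`. -/
noncomputable def vWeight (s : ℝ) {V : Type*} [NormedAddCommGroup V] (z : V) : ℝ :=
  (1 + ‖z‖ ^ 2) ^ (s / 2)

/-- The action of a matrix on `ℝ^{2d}`. -/
noncomputable def matApply {ι : Type*} [Fintype ι] (M : Matrix ι ι ℝ)
    (z : EuclideanSpace ℝ ι) : EuclideanSpace ℝ ι := WithLp.toLp 2 (M.mulVec z)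

/-- The standard symplectic matrix `J = [[0, -I],[I, 0]]`. -/
noncomputable def Jmat (d : ℕ) : Matrix (Fin d ⊕ Fin d) (Fin d ⊕ Fin d) ℝ :=
  Matrix.fromBlocks 0 (-1) 1 0

/-- `𝒜 ∈ Sp(d,ℝ)` iff `𝒜ᵀ J 𝒜 = J`. -/
def IsSymplectic {d : ℕ} (A : Matrix (Fin d ⊕ Fin d) (Fin d ⊕ Fin d) ℝ) : Prop :=
  A.transpose * Jmat d * A = Jmat d

/-- The time-frequency shift `π(z)f(t) = e^{2πi η·t} f(t - x)` of a plain function,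
where `z = (x, η)`. -/
noncomputable def tfShift {d : ℕ} (z : PhaseSpace d) (f : ConfSpace d → ℂ) :
    ConfSpace d → ℂ := fun t =>
  Complex.exp (2 * (π : ℂ) * Complex.I * ∑ i, (freqPart z i : ℂ) * (t i : ℂ)) *
    f (t - posPart z)

lemma schwartz_memℒp_two {ι : Type*} [Fintype ι]
    (g : SchwartzMap (EuclideanSpace ℝ ι) ℂ) : MemLp (⇑g) 2 (volume) := by
  rw [memLp_two_iff_integrable_sq_norm g.continuous.aestronglyMeasurable]
  have hbd : ∀ x, ‖(‖g x‖ ^ 2 : ℝ)‖ ≤ (SchwartzMap.seminorm ℝ 0 0 g) * ‖g x‖ := by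
    intro x
    have h1 : ‖g x‖ ≤ SchwartzMap.seminorm ℝ 0 0 g := by
      simpa using g.le_seminorm ℝ 0 0 x
    have h2 : (0:ℝ) ≤ ‖g x‖ := norm_nonneg _
    calc ‖(‖g x‖ ^ 2 : ℝ)‖ = ‖g x‖ * ‖g x‖ := by
          rw [Real.norm_eq_abs, _root_.abs_of_nonneg (by positivity : (0:ℝ) ≤ ‖g x‖ ^ 2)]; ring
      _ ≤ (SchwartzMap.seminorm ℝ 0 0 g) * ‖g x‖ := by nlinarith
  exact (g.integrable.norm.const_mul _).mono'
    (Continuous.aestronglyMeasurable (by fun_prop))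
    (Filter.Eventually.of_forall hbd)

lemma continuous_tfShift {d : ℕ} (z : PhaseSpace d) (g : SchwartzMap (ConfSpace d) ℂ) :
    Continuous (tfShift z (⇑g)) := by
  apply Continuous.mul
  · apply Complex.continuous_exp.comp
    fun_prop
  · exact g.continuous.comp (continuous_id.sub continuous_const)

lemma memℒp_two_tfShift {d : ℕ} (z : PhaseSpace d) (g : SchwartzMap (ConfSpace d) ℂ) :
    MemLp (tfShift z (⇑g)) 2 (volume) := by
  have htrans : MemLp (fun t : ConfSpace d => g (t - posPart z)) 2 volume :=
    (schwartz_memℒp_two g).comp_measurePreserving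
      (measurePreserving_sub_right volume (posPart z))
  refine htrans.of_le ?_ ?_
  · exact (continuous_tfShift z g).aestronglyMeasurable
  · refine Filter.Eventually.of_forall fun t => ?_
    have hre : (2 * (π : ℂ) * Complex.I * ∑ i, (freqPart z i : ℂ) * (t i : ℂ)).re = 0 := by
      have : (2 * (π : ℂ) * Complex.I * ∑ i, (freqPart z i : ℂ) * (t i : ℂ)) =
          ((2 * π * ∑ i, freqPart z i * t i : ℝ) : ℂ) * Complex.I := by
        push_cast; ring
      rw [this]
      simp
    have h1 : ‖Complex.exp (2 * (π : ℂ) * Complex.I *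
        ∑ i, (freqPart z i : ℂ) * (t i : ℂ))‖ = 1 := by
      rw [Complex.norm_exp, hre, Real.exp_zero]
    show ‖tfShift z (⇑g) t‖ ≤ ‖g (t - posPart z)‖
    rw [tfShift, norm_mul, h1, one_mul]

/-- `L²(ℝ^d)`. -/
noncomputable abbrev L2Space (d : ℕ) := Lp ℂ 2 (volume : Measure (ConfSpace d))

/-- The time-frequency shift `π(z)g` of a Schwartz function, as an element of `L²(ℝ^d)`. -/
noncomputable def tfShiftL2 {d : ℕ} (z : PhaseSpace d) (g : SchwartzMap (ConfSpace d) ℂ) :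
    L2Space d := (memℒp_two_tfShift z g).toLp

/-- Convolution on `ℝ^{2d}`: `(F ∗ H)(w) = ∫ F(w - z) H(z) dz`. -/
noncomputable def convFn {V : Type*} [NormedAddCommGroup V] [MeasureSpace V]
    (F H : V → ℝ) : V → ℝ := fun w => ∫ z, F (w - z) * H z

/-! The bound for `T*` is the bound for `T` read with the roles of `w` and `z` exchanged, since
`|⟨T*π(z)g, π(w)g⟩| = |⟨Tπ(w)g, π(z)g⟩|`, and a symplectic `𝒜` is invertible, so
`z - 𝒜w = -𝒜(w - 𝒜⁻¹z)`. The new controlling function is `H` composed with the invertible linear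
map `-𝒜`, which stays in `L¹_{v_s}`: a linear change of variables preserves integrability, and
`v_s(z) ≤ (1 + ‖𝒜⁻¹‖²)^{s/2} v_s(𝒜z)`. -/

section Weight

variable {V : Type*} [NormedAddCommGroup V]

lemma vWeight_nonneg (s : ℝ) (z : V) : 0 ≤ vWeight s z := by
  unfold vWeight
  positivity

lemma continuous_vWeight (s : ℝ) : Continuous (vWeight s : V → ℝ) :=
  Continuous.rpow_const (by fun_prop) fun _ => Or.inl (by positivity)

lemma vWeight_le_mul_vWeight {s : ℝ} (hs : 0 ≤ s) {z y : V} {C : ℝ} (h : ‖z‖ ≤ C * ‖y‖) :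
    vWeight s z ≤ (1 + C ^ 2) ^ (s / 2) * vWeight s y := by
  have hsq : ‖z‖ ^ 2 ≤ (C * ‖y‖) ^ 2 := pow_le_pow_left₀ (norm_nonneg z) h 2
  have hbase : 1 + ‖z‖ ^ 2 ≤ (1 + C ^ 2) * (1 + ‖y‖ ^ 2) := by nlinarith [sq_nonneg C]
  rw [vWeight, vWeight, ← Real.mul_rpow (by positivity) (by positivity)]
  exact Real.rpow_le_rpow (by positivity) hbase (by positivity)

end Weight

section ChangeOfVariables

variable {E : Type*} [NormedAddCommGroup E] [NormedSpace ℝ E] [FiniteDimensional ℝ E]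
  [MeasurableSpace E] [BorelSpace E] {μ : Measure E} [μ.IsAddHaarMeasure]

theorem MeasureTheory.Integrable.comp_continuousLinearEquiv {F : Type*} [NormedAddCommGroup F]
    {f : E → F} (hf : Integrable f μ) (L : E ≃L[ℝ] E) : Integrable (f ∘ L) μ := by
  have hdet : LinearMap.det (L : E →ₗ[ℝ] E) ≠ 0 := (LinearEquiv.isUnit_det' L.toLinearEquiv).ne_zero
  have hf' : Integrable f (Measure.map L μ) := by
    rw [show (L : E → E) = (L : E →ₗ[ℝ] E) from rfl,
      Measure.map_linearMap_addHaar_eq_smul_addHaar μ hdet]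
    exact hf.smul_measure ENNReal.ofReal_ne_top
  exact hf'.comp_measurable L.continuous.measurable

theorem MeasureTheory.Integrable.norm_comp_mul_vWeight {s : ℝ} (hs : 0 ≤ s) {F : E → ℝ}
    (hF : Measurable F) (hi : Integrable (fun z => ‖F z‖ * vWeight s z) μ) (L : E ≃L[ℝ] E) :
    Integrable (fun z => ‖F (L z)‖ * vWeight s z) μ := by
  set C := (1 + ‖(L.symm : E →L[ℝ] E)‖ ^ 2) ^ (s / 2)
  have hmeas : AEStronglyMeasurable (fun z => ‖F (L z)‖ * vWeight s z) μ :=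
    ((hF.comp L.continuous.measurable).norm.mul
      (continuous_vWeight s).measurable).aestronglyMeasurable
  refine ((hi.comp_continuousLinearEquiv L).const_mul C).mono' hmeas
    (Filter.Eventually.of_forall fun z => ?_)
  have hw : vWeight s z ≤ C * vWeight s (L z) :=
    vWeight_le_mul_vWeight hs (by simpa using (L.symm : E →L[ℝ] E).le_opNorm (L z))
  rw [Real.norm_of_nonneg (mul_nonneg (norm_nonneg _) (vWeight_nonneg s z))]
  calc ‖F (L z)‖ * vWeight s z ≤ ‖F (L z)‖ * (C * vWeight s (L z)) := by gcongr
    _ = C * (‖F (L z)‖ * vWeight s (L z)) := by ring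

end ChangeOfVariables

section MatrixAction

variable {ι : Type*} [Fintype ι] [DecidableEq ι]

lemma matApply_sub (M : Matrix ι ι ℝ) (z w : EuclideanSpace ℝ ι) :
    matApply M (z - w) = matApply M z - matApply M w :=
  map_sub (Matrix.toLpLin 2 2 M) z w

lemma matApply_matApply_nonsing_inv {M : Matrix ι ι ℝ} (hM : IsUnit M.det)
    (z : EuclideanSpace ℝ ι) : matApply M (matApply M⁻¹ z) = z := by
  apply WithLp.ofLp_injective
  simp [matApply, Matrix.mulVec_mulVec, Matrix.mul_nonsing_inv M hM]

noncomputable def matApplyEquiv (M : Matrix ι ι ℝ) (hM : IsUnit M.det) :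
    EuclideanSpace ℝ ι ≃L[ℝ] EuclideanSpace ℝ ι :=
  (LinearMap.equivOfDetNeZero (Matrix.toLpLin 2 2 M)
    (by simpa using hM.ne_zero)).toContinuousLinearEquiv

end MatrixAction

lemma Jmat_mul_self (d : ℕ) : Jmat d * Jmat d = -1 := by
  simp [Jmat, Matrix.fromBlocks_multiply, ← Matrix.fromBlocks_one, Matrix.fromBlocks_neg]

lemma IsSymplectic.isUnit_det {d : ℕ} {A : Matrix (Fin d ⊕ Fin d) (Fin d ⊕ Fin d) ℝ}
    (hA : IsSymplectic A) : IsUnit A.det := by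
  refine Matrix.isUnit_det_of_left_inverse (B := -(Jmat d * A.transpose * Jmat d)) ?_
  calc -(Jmat d * A.transpose * Jmat d) * A = -(Jmat d * (A.transpose * Jmat d * A)) := by
        simp only [neg_mul, Matrix.mul_assoc]
    _ = 1 := by rw [hA, Jmat_mul_self, neg_neg]

theorem adjoint_of_generalized_metaplectic_general (d : ℕ) (s : ℝ) (hs : 0 ≤ s)
    (A : Matrix (Fin d ⊕ Fin d) (Fin d ⊕ Fin d) ℝ) (hA : IsSymplectic A)
    (g : SchwartzMap (ConfSpace d) ℂ)
    (T : L2Space d →L[ℂ] L2Space d)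
    (H : PhaseSpace d → ℝ) (hm : Measurable H)
    (hi : Integrable (fun z => ‖H z‖ * vWeight s z))
    (hb : ∀ w z : PhaseSpace d,
      ‖inner (𝕜 := ℂ) (tfShiftL2 w g) (T (tfShiftL2 z g))‖ ≤ H (w - matApply A z)) :
    (∀ w z : PhaseSpace d,
      ‖inner (𝕜 := ℂ) (tfShiftL2 w g) ((ContinuousLinearMap.adjoint T) (tfShiftL2 z g))‖ ≤
        H (-(matApply A (w - matApply A⁻¹ z)))) ∧
    Integrable (fun z => ‖H (-(matApply A z))‖ * vWeight s z) := by
  have hdet : IsUnit A.det := hA.isUnit_det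
  refine ⟨fun w z => ?_, ?_⟩
  · calc ‖inner (𝕜 := ℂ) (tfShiftL2 w g) ((ContinuousLinearMap.adjoint T) (tfShiftL2 z g))‖
        = ‖inner (𝕜 := ℂ) (tfShiftL2 z g) (T (tfShiftL2 w g))‖ := by
          rw [ContinuousLinearMap.adjoint_inner_right, norm_inner_symm]
      _ ≤ H (z - matApply A w) := hb z w
      _ = H (-(matApply A (w - matApply A⁻¹ z))) := by
          rw [matApply_sub, matApply_matApply_nonsing_inv hdet, neg_sub]
  · exact hi.norm_comp_mul_vWeight hs hm
      ((matApplyEquiv A hdet).trans (ContinuousLinearEquiv.neg ℝ))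

/-- The adjoint of a generalized metaplectic operator in `FIO(𝒜, v_s)` satisfies the kernel
bound defining `FIO(𝒜⁻¹, v_s)`, with controlling function `z ↦ H(-𝒜z)`. -/
theorem adjoint_of_generalized_metaplectic (d : ℕ) (s : ℝ) (hs : 0 ≤ s)
    (A : Matrix (Fin d ⊕ Fin d) (Fin d ⊕ Fin d) ℝ) (hA : IsSymplectic A)
    (g : SchwartzMap (ConfSpace d) ℂ) (hg : g ≠ 0)
    (T : L2Space d →L[ℂ] L2Space d)
    (H : PhaseSpace d → ℝ) (hm : Measurable H)
    (hi : Integrable (fun z => ‖H z‖ * vWeight s z))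
    (hb : ∀ w z : PhaseSpace d,
      ‖inner (𝕜 := ℂ) (tfShiftL2 w g) (T (tfShiftL2 z g))‖ ≤ H (w - matApply A z)) :
    (∀ w z : PhaseSpace d,
      ‖inner (𝕜 := ℂ) (tfShiftL2 w g) ((ContinuousLinearMap.adjoint T) (tfShiftL2 z g))‖ ≤
        H (-(matApply A (w - matApply A⁻¹ z)))) ∧
    Integrable (fun z => ‖H (-(matApply A z))‖ * vWeight s z) :=
  adjoint_of_generalized_metaplectic_general d s hs A hA g T H hm hi hb
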